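/- (Uniqueness of the paramagnetic solution of the HHM self-consistency equations above the mean-field critical temperature.) Let p ≥ 1, σ ∈ (1/2,1), β > 0 and suppose β C_{2σ−1} < 1 (i.e. β < β_c^{MF} = C_{2σ−1}^{−1}). If m ∈ ℝ^p satisfies, for every μ ∈ {1,…,p}, m_μ = 2^{−p} Σ_{ξ∈{−1,1}^p} ξ_μ tanh(β C_{2σ−1} Σ_{ν=1}^p m_ν ξ_ν), then m = 0. -/

import Mathlib

open Real

/-- The ±1 value of a Boolean spin. -/
noncomputable def spin (b : Bool) : ℝ := if b then 1 else -1

/-- The constant `C_y = 2^{-y} / (1 - 2^{-y})`. -/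
noncomputable def Cconst (y : ℝ) : ℝ := (2 : ℝ) ^ (-y) / (1 - (2 : ℝ) ^ (-y))

/-!
Multiplying the `μ`-th equation by `m μ` and summing over `μ` gives `‖m‖² = ⟨S tanh (c S)⟩`,
where `S ξ = ∑ ν, m ν ξ ν` and `⟨·⟩` is the average over `ξ`. Pointwise
`x tanh (c x) ≤ max c 0 * x²`, and `⟨S²⟩ = ‖m‖²` because distinct spins are orthogonal, so
`‖m‖² ≤ max c 0 * ‖m‖²`, which forces `m = 0` when `c < 1`.
-/

lemma spin_not (b : Bool) : spin (!b) = -spin b := by cases b <;> simp [spin]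

lemma spin_mul_self (b : Bool) : spin b * spin b = 1 := by cases b <;> simp [spin]

section Hypercube

variable {ι : Type*} [Fintype ι] [DecidableEq ι]

lemma sum_spin_mul_spin (μ ν : ι) :
    ∑ ξ : ι → Bool, spin (ξ μ) * spin (ξ ν) = if μ = ν then 2 ^ Fintype.card ι else 0 := by
  split_ifs with hμν
  · simp [hμν, spin_mul_self]
  · -- flipping the spin at `μ` negates every summand
    have hflip : Function.Involutive fun ξ : ι → Bool => Function.update ξ μ (!ξ μ) := by
      intro ξ; simp
    have hneg := Fintype.sum_equiv (hflip.toPerm _) (fun ξ => spin (ξ μ) * spin (ξ ν))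
      (fun ξ => -(spin (ξ μ) * spin (ξ ν)))
      (fun ξ => by simp [Function.update_of_ne (Ne.symm hμν), spin_not])
    rw [Finset.sum_neg_distrib] at hneg
    linarith

lemma sum_sum_mul_spin_sq (m : ι → ℝ) :
    ∑ ξ : ι → Bool, (∑ ν, m ν * spin (ξ ν)) ^ 2 = 2 ^ Fintype.card ι * ∑ ν, m ν ^ 2 := by
  calc ∑ ξ : ι → Bool, (∑ ν, m ν * spin (ξ ν)) ^ 2
      = ∑ ξ : ι → Bool, ∑ μ, ∑ ν, m μ * m ν * (spin (ξ μ) * spin (ξ ν)) := by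
        simp only [sq, Finset.sum_mul_sum, mul_mul_mul_comm]
    _ = ∑ μ, ∑ ν, m μ * m ν * ∑ ξ : ι → Bool, spin (ξ μ) * spin (ξ ν) := by
        simp only [Finset.mul_sum]
        rw [Finset.sum_comm]
        exact Finset.sum_congr rfl fun μ _ => Finset.sum_comm
    _ = 2 ^ Fintype.card ι * ∑ ν, m ν ^ 2 := by
        simp [sum_spin_mul_spin, Finset.mul_sum, sq, mul_comm]

end Hypercube

lemma mul_sinh_nonneg (x : ℝ) : 0 ≤ x * sinh x := by
  rcases le_total 0 x with hx | hx
  · exact mul_nonneg hx (sinh_nonneg_iff.mpr hx)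
  · exact mul_nonneg_of_nonpos_of_nonpos hx (sinh_nonpos_iff.mpr hx)

lemma mul_tanh_nonneg (x : ℝ) : 0 ≤ x * tanh x := by
  rw [tanh_eq_sinh_div_cosh, ← mul_div_assoc]
  exact div_nonneg (mul_sinh_nonneg x) (cosh_pos x).le

lemma mul_tanh_le_sq (x : ℝ) : x * tanh x ≤ x ^ 2 := by
  have hmono : Monotone fun y => y * cosh y - sinh y := by
    refine monotone_of_deriv_nonneg (by fun_prop) fun y => ?_
    rw [(((hasDerivAt_id' y).fun_mul (hasDerivAt_cosh y)).fun_sub (hasDerivAt_sinh y)).deriv]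
    simpa using mul_sinh_nonneg y
  have hsign : 0 ≤ x * (x * cosh x - sinh x) := by
    rcases le_total 0 x with hx | hx
    · exact mul_nonneg hx (by simpa using hmono hx)
    · exact mul_nonneg_of_nonpos_of_nonpos hx (by simpa using hmono hx)
  rw [tanh_eq_sinh_div_cosh, ← mul_div_assoc, div_le_iff₀ (cosh_pos x)]
  nlinarith

lemma mul_tanh_mul_le (c x : ℝ) : x * tanh (c * x) ≤ max c 0 * x ^ 2 := by
  have h0 := mul_tanh_nonneg (c * x)
  have h1 := mul_tanh_le_sq (c * x)
  rcases lt_trichotomy c 0 with hc | rfl | hc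
  · rw [max_eq_right hc.le]; nlinarith
  · simp
  · rw [max_eq_left hc.le]; nlinarith

theorem eq_zero_of_eq_avg_spin_mul_tanh {ι : Type*} [Fintype ι] [DecidableEq ι] {c : ℝ}
    (hc : c < 1) (m : ι → ℝ)
    (hm : ∀ μ, m μ = ((2 : ℝ) ^ Fintype.card ι)⁻¹ *
      ∑ ξ : ι → Bool, spin (ξ μ) * tanh (c * ∑ ν, m ν * spin (ξ ν))) :
    m = 0 := by
  set S : (ι → Bool) → ℝ := fun ξ => ∑ ν, m ν * spin (ξ ν)
  have hN : (0 : ℝ) < 2 ^ Fintype.card ι := by positivity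
  have hcontract : ∑ μ, m μ ^ 2 ≤ max c 0 * ∑ μ, m μ ^ 2 :=
    calc ∑ μ, m μ ^ 2
        = ∑ μ, m μ * (((2 : ℝ) ^ Fintype.card ι)⁻¹ * ∑ ξ, spin (ξ μ) * tanh (c * S ξ)) :=
          Finset.sum_congr rfl fun μ _ => by rw [sq]; nth_rw 2 [hm μ]
      _ = ((2 : ℝ) ^ Fintype.card ι)⁻¹ * ∑ ξ, S ξ * tanh (c * S ξ) := by
          simp only [S, Finset.mul_sum, Finset.sum_mul]
          rw [Finset.sum_comm]
          exact Finset.sum_congr rfl fun ξ _ => Finset.sum_congr rfl fun μ _ => by ring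
      _ ≤ ((2 : ℝ) ^ Fintype.card ι)⁻¹ * ∑ ξ, max c 0 * S ξ ^ 2 :=
          mul_le_mul_of_nonneg_left (Finset.sum_le_sum fun ξ _ => mul_tanh_mul_le c (S ξ))
            (inv_nonneg.mpr hN.le)
      _ = max c 0 * ∑ μ, m μ ^ 2 := by
          rw [← Finset.mul_sum, sum_sum_mul_spin_sq, mul_left_comm (max c 0),
            inv_mul_cancel_left₀ hN.ne']
  have hzero : ∑ μ, m μ ^ 2 = 0 := by
    have : 0 ≤ ∑ μ, m μ ^ 2 := by positivity
    nlinarith [max_lt hc one_pos]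
  funext μ
  exact pow_eq_zero_iff two_ne_zero |>.mp <|
    (Finset.sum_eq_zero_iff_of_nonneg fun ν _ => sq_nonneg (m ν)).mp hzero μ (Finset.mem_univ μ)

theorem hopfield_paramagnetic_uniqueness_general (p : ℕ) (σ β : ℝ)
    (hcrit : β * Cconst (2 * σ - 1) < 1) (m : Fin p → ℝ)
    (hm : ∀ μ, m μ = ((2 : ℝ) ^ p)⁻¹ *
      ∑ ξ : Fin p → Bool,
        spin (ξ μ) * Real.tanh (β * Cconst (2 * σ - 1) * ∑ ν, m ν * spin (ξ ν))) :
    m = 0 :=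
  eq_zero_of_eq_avg_spin_mul_tanh hcrit m (by simpa only [Fintype.card_fin] using hm)

/-- uniqueness of the paramagnetic solution of the HHM zero-field
self-consistency equations above the mean-field critical temperature. -/
theorem hopfield_paramagnetic_uniqueness (p : ℕ) (hp : 1 ≤ p) (σ β : ℝ)
    (hσ : σ ∈ Set.Ioo (1 / 2 : ℝ) 1) (hβ : 0 < β)
    (hcrit : β * Cconst (2 * σ - 1) < 1) (m : Fin p → ℝ)
    (hm : ∀ μ, m μ = ((2 : ℝ) ^ p)⁻¹ *
      ∑ ξ : Fin p → Bool,
        spin (ξ μ) * Real.tanh (β * Cconst (2 * σ - 1) * ∑ ν, m ν * spin (ξ ν))) :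
    m = 0 :=
  hopfield_paramagnetic_uniqueness_general p σ β hcrit m hm
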